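/- arXiv:2108.05812 — 2 statements merged into one kernel-verified Lean document; each statement's English description precedes it below -/
import Mathlib

section
/- Let I be a stable monomial ideal in the skew polynomial ring R, let w be a monomial in I, and let v be any monomial of R. Then g(v * g(w)) = g(v * w). -/
open Finsupp

/-- Exponent vectors of monomials in `n` variables. -/
abbrev NExp (n : ℕ) := Fin n →₀ ℕ

/-- Integer exponent vectors (for Laurent-type arguments of the bicharacter `C`). -/
abbrev ZExp (n : ℕ) := Fin n →₀ ℤ

/-- Canonical inclusion of `ℕ`-exponent vectors into `ℤ`-exponent vectors. -/
noncomputable def zc {n : ℕ} (a : NExp n) : ZExp n := Finsupp.mapRange (fun (m : ℕ) => (m : ℤ)) (by simp) a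

/-- Total degree of a monomial. -/
def wdeg {n : ℕ} (a : NExp n) : ℕ := a.sum fun _ e => e

/-- `maxIdx a` is the 1-based index of the largest variable occurring in `x^a`
(`0` if `a = 0`, i.e. for the monomial `1`). -/
def maxIdx {n : ℕ} (a : NExp n) : ℕ := a.support.sup fun i => (i : ℕ) + 1

/-- `max(u) ≤ min(y)`: every variable occurring in `y` has (1-based) index at least
`maxIdx u`.  (This is vacuously true when `y = 0`, matching `min(1) = +∞`.) -/
def maxLeMin {n : ℕ} (u y : NExp n) : Prop := ∀ j ∈ y.support, maxIdx u ≤ (j : ℕ) + 1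

/-- Data exhibiting the ring `R` as the skew polynomial ring `k_q[x_1,…,x_n]`:
the monomials `x^a` form a `k`-basis, multiply according to the alternating
bicharacter `C`, and `C` is induced by the defining constants `q i j` with
`x_i x_j = q i j • (x_j x_i)`. -/
structure SkewPoly (k R : Type*) [CommRing k] [Ring R] [Algebra k R] (n : ℕ) : Type _ where
  /-- the monomial `x^a` -/
  mon : NExp n → R
  /-- the bicharacter `C`, defined by `x^a x^b = C(x^a,x^b) x^{a+b}` -/
  C : ZExp n → ZExp n → kˣ
  /-- the defining constants `q_{i,j}` -/
  q : Fin n → Fin n → kˣ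
  q_diag : ∀ i, q i i = 1
  q_symm : ∀ i j, q j i = (q i j)⁻¹
  /-- the monomials form a `k`-basis of `R` -/
  basis : Module.Basis (NExp n) k R
  basis_eq : ∀ a, basis a = mon a
  mon_zero : mon 0 = 1
  mon_mul : ∀ a b, mon a * mon b = ((C (zc a) (zc b) : kˣ) : k) • mon (a + b)
  C_add_left : ∀ a b c, C (a + b) c = C a c * C b c
  C_add_right : ∀ a b c, C a (b + c) = C a b * C a c
  C_single : ∀ i j : Fin n,
    C (Finsupp.single i 1) (Finsupp.single j 1) = if j < i then q i j else 1

namespace SkewPoly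

variable {k R : Type*} [CommRing k] [Ring R] [Algebra k R] {n : ℕ}

/-- The bicharacter `χ(a,b) = C(a,b)/C(b,a)`, so that `x^a x^b = χ(x^a,x^b) x^b x^a`. -/
def chi (S : SkewPoly k R n) (a b : ZExp n) : kˣ := S.C a b * (S.C b a)⁻¹

/-- The set of exponent vectors of the monomials lying in the right ideal `I`. -/
def monSet (S : SkewPoly k R n) (I : Submodule Rᵐᵒᵖ R) : Set (NExp n) :=
  {w | S.mon w ∈ I}

/-- `I` is a monomial (right) ideal: it is generated by a set of monomials. -/
def IsMonomialIdeal (S : SkewPoly k R n) (I : Submodule Rᵐᵒᵖ R) : Prop :=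
  ∃ T : Set (NExp n), I = Submodule.span Rᵐᵒᵖ (S.mon '' T)

/-- `I` is stable: for every monomial `w ∈ I` and every index `i < max(w)`,
the monomial `(x_i * w)/x_{max(w)}` lies in `I`. -/
def IsStable (S : SkewPoly k R n) (I : Submodule Rᵐᵒᵖ R) : Prop :=
  ∀ w ∈ S.monSet I, ∀ i m : Fin n, (m : ℕ) + 1 = maxIdx w → i < m →
    w + Finsupp.single i 1 - Finsupp.single m 1 ∈ S.monSet I

/-- The canonical (minimal) monomial generating set `G(I)`: monomials of `I` that are
not proper multiples of other monomials of `I`. -/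
def G (S : SkewPoly k R n) (I : Submodule Rᵐᵒᵖ R) : Set (NExp n) :=
  {u | u ∈ S.monSet I ∧ ∀ v ∈ S.monSet I, v ≤ u → v = u}

/-- `g` is the decomposition function of the stable ideal `I`: it sends a monomial
`w ∈ I` to the generator `u ∈ G(I)` of its canonical decomposition `w = u * y`,
`max(u) ≤ min(y)`. -/
def IsDecompFun (S : SkewPoly k R n) (I : Submodule Rᵐᵒᵖ R)
    (g : NExp n → NExp n) : Prop :=
  ∀ w ∈ S.monSet I, g w ∈ S.G I ∧ g w ≤ w ∧ maxLeMin (g w) (w - g w)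

end SkewPoly

/-! Canonical decompositions `u * y` with `u ∈ G(I)` and `max(u) ≤ min(y)` are unique, because two
of them with the same product have comparable first factors, and `G(I)` is an antichain. Writing
`w = g(w) * y` and `v * g(w) = u' * y'`, minimality of `u'` forces `max(u') ≤ max(g(w)) ≤ min(y)`, so
`v * w = u' * (y' * y)` is the canonical decomposition of `v * w`. -/

section Statements

open Finsupp

variable {k R : Type*} [CommRing k] [Ring R] [Algebra k R] {n : ℕ}

lemma le_maxIdx {a : NExp n} {j : Fin n} (hj : j ∈ a.support) : (j : ℕ) + 1 ≤ maxIdx a :=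
  Finset.le_sup (f := fun i : Fin n => (i : ℕ) + 1) hj

lemma apply_eq_zero_of_maxIdx_lt {a : NExp n} {j : Fin n} (hj : maxIdx a < (j : ℕ) + 1) :
    a j = 0 :=
  Finsupp.notMem_support_iff.mp fun hmem => (le_maxIdx hmem).not_gt hj

lemma maxLeMin.apply_eq_zero {u y : NExp n} (h : maxLeMin u y) {j : Fin n}
    (hj : (j : ℕ) + 1 < maxIdx u) : y j = 0 :=
  Finsupp.notMem_support_iff.mp fun hmem => (h j hmem).not_gt hj

/-- Below `max(b)` the factor `y'` vanishes, so only the coordinates from `max(b)` on need checking. -/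
lemma le_of_add_eq_add_of_maxLeMin {a b y y' : NExp n} (h : a + y = b + y')
    (hb : maxLeMin b y') (htop : ∀ j : Fin n, maxIdx b ≤ (j : ℕ) + 1 → a j ≤ b j) : a ≤ b := by
  intro j
  rcases lt_or_ge ((j : ℕ) + 1) (maxIdx b) with hlt | hge
  · have hj := DFunLike.congr_fun h j
    simp only [Finsupp.add_apply, hb.apply_eq_zero hlt] at hj
    omega
  · exact htop j hge

lemma le_total_of_add_eq_add_of_maxLeMin {a b y y' : NExp n} (h : a + y = b + y')
    (ha : maxLeMin a y) (hb : maxLeMin b y') : a ≤ b ∨ b ≤ a := by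
  by_cases htop : ∀ j : Fin n, maxIdx b ≤ (j : ℕ) + 1 → a j ≤ b j
  · exact Or.inl (le_of_add_eq_add_of_maxLeMin h hb htop)
  push Not at htop
  obtain ⟨j, hbj, hlt⟩ := htop
  have haj : (j : ℕ) + 1 ≤ maxIdx a := le_maxIdx (Finsupp.mem_support_iff.mpr (by omega))
  refine Or.inr (le_of_add_eq_add_of_maxLeMin h.symm ha fun j' hj' => ?_)
  rcases eq_or_ne j' j with rfl | hne
  · exact hlt.le
  · have hj'j : (j : ℕ) < j' := by have := Fin.val_ne_of_ne hne; omega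
    simp [apply_eq_zero_of_maxIdx_lt (a := b) (j := j') (by omega)]

lemma maxLeMin.add {u y z : NExp n} (hy : maxLeMin u y) (hz : maxLeMin u z) :
    maxLeMin u (y + z) := fun j hj =>
  (Finset.mem_union.mp (Finsupp.support_add hj)).elim (hy j) (hz j)

namespace SkewPoly

variable (S : SkewPoly k R n) (I : Submodule Rᵐᵒᵖ R)

lemma add_mem_monSet {w : NExp n} (hw : w ∈ S.monSet I) (v : NExp n) : w + v ∈ S.monSet I := by
  have hmon : S.mon (w + v) = S.mon w * (((S.C (zc w) (zc v))⁻¹ : kˣ) : k) • S.mon v := by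
    rw [mul_smul_comm, S.mon_mul, smul_smul, ← Units.val_mul, inv_mul_cancel, Units.val_one,
      one_smul]
  change S.mon (w + v) ∈ I
  rw [hmon]
  exact I.smul_mem (MulOpposite.op _) hw

variable {S I}

lemma eq_of_mem_G_of_add_eq_add {u u' y y' : NExp n} (hu : u ∈ S.G I) (hu' : u' ∈ S.G I)
    (h : u + y = u' + y') (hy : maxLeMin u y) (hy' : maxLeMin u' y') : u = u' :=
  (le_total_of_add_eq_add_of_maxLeMin h hy hy').elim (fun hle => hu'.2 u hu.1 hle)
    (fun hle => (hu.2 u' hu'.1 hle).symm)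

lemma IsDecompFun.apply_add_eq {g : NExp n → NExp n} (hg : S.IsDecompFun I g) {u y : NExp n}
    (hu : u ∈ S.G I) (hy : maxLeMin u y) : g (u + y) = u := by
  obtain ⟨hgG, hgle, hgy⟩ := hg (u + y) (S.add_mem_monSet I hu.1 y)
  exact (eq_of_mem_G_of_add_eq_add hu hgG (add_tsub_cancel_of_le hgle).symm hy hgy).symm

/-- If `max(u') > max(u)`, then `u'` agrees with `v * u` below `max(u')` and `u` vanishes from there
on, so `u ≤ u'`, contradicting the minimality of `u'`. -/
lemma maxIdx_le_of_add_eq_add {u u' v y' : NExp n} (hu : u ∈ S.monSet I) (hu' : u' ∈ S.G I)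
    (h : v + u = u' + y') (hy' : maxLeMin u' y') : maxIdx u' ≤ maxIdx u := by
  by_contra! hlt
  have hle : u ≤ u' := fun j => by
    rcases lt_or_ge ((j : ℕ) + 1) (maxIdx u') with hj | hj
    · have hvj := DFunLike.congr_fun h j
      simp only [Finsupp.add_apply, hy'.apply_eq_zero hj] at hvj
      omega
    · simp [apply_eq_zero_of_maxIdx_lt (a := u) (j := j) (by omega)]
  exact hlt.ne (congrArg maxIdx (hu'.2 u hu hle))

end SkewPoly

theorem stmt2_general
    (S : SkewPoly k R n) (I : Submodule Rᵐᵒᵖ R)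
    (g : NExp n → NExp n) (hg : S.IsDecompFun I g) :
    ∀ w ∈ S.monSet I, ∀ v : NExp n, g (v + g w) = g (v + w) := by
  intro w hw v
  obtain ⟨hgG, hgle, hgy⟩ := hg w hw
  have hvg : v + g w ∈ S.monSet I := add_comm (g w) v ▸ S.add_mem_monSet I hgG.1 v
  obtain ⟨hG', hle', hy'⟩ := hg (v + g w) hvg
  have hmax : maxIdx (g (v + g w)) ≤ maxIdx (g w) :=
    SkewPoly.maxIdx_le_of_add_eq_add hgG.1 hG' (add_tsub_cancel_of_le hle').symm hy'
  have hvw : v + w = g (v + g w) + ((v + g w - g (v + g w)) + (w - g w)) := by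
    rw [← add_assoc, add_tsub_cancel_of_le hle', add_assoc, add_tsub_cancel_of_le hgle]
  rw [hvw, hg.apply_add_eq hG' (hy'.add fun j hj => hmax.trans (hgy j hj))]

theorem stmt2 [IsNoetherianRing k]
    (S : SkewPoly k R n) (I : Submodule Rᵐᵒᵖ R)
    (hmono : S.IsMonomialIdeal I) (hstab : S.IsStable I)
    (g : NExp n → NExp n) (hg : S.IsDecompFun I g) :
    ∀ w ∈ S.monSet I, ∀ v : NExp n, g (v + g w) = g (v + w) :=
  stmt2_general S I g hg

end Statements
end

section
/- Let I be a stable monomial ideal in the skew polynomial ring R. The map D on the complex K_•(I) of free right R-modules satisfies D ∘ D = 0, so (K_•(I), D) is a complex. -/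
open Finsupp

section Complex

open Finsupp

/-- Symbols `e(i_1,…,i_q; u)`: a list of variable indices together with a monomial. -/
abbrev EKSym (n : ℕ) := List (Fin n) × NExp n

/-- The exponent vector of `x_σ = x_{i_1} ⋯ x_{i_q}`. -/
noncomputable def listMon {n : ℕ} (σ : List (Fin n)) : NExp n :=
  (σ.map fun i => Finsupp.single i 1).sum

variable {k R : Type*} [CommRing k] [Ring R] [Algebra k R] {n : ℕ}

/-- Right action of `R` on the free right `R`-module `EKSym n →₀ R`. -/
noncomputable def rmul (f : EKSym n →₀ R) (r : R) : EKSym n →₀ R :=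
  f.mapRange (· * r) (zero_mul r)

/-- A symbol `e(i_1,…,i_q;u)` is admissible for `I` when `u ∈ G(I)` and
`1 ≤ i_1 < ⋯ < i_q < max(u)`. -/
def Adm (S : SkewPoly k R n) (I : Submodule Rᵐᵒᵖ R) (s : EKSym n) : Prop :=
  s.1.Pairwise (· < ·) ∧ s.2 ∈ S.G I ∧ ∀ i ∈ s.1, (i : ℕ) + 1 < maxIdx s.2

/-- The value of the differential `D` of the big complex `K_•(I)` on the symbol
`e(σ;u)`:
`D e(σ;u) = Σ_r (−1)^r e(σ_r;u) C(x_{σ_r}*u, x_{i_r})⁻¹ x_{i_r}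
          − Σ_r (−1)^r e(σ_r;u_r) C(x_{σ_r}, y_r)⁻¹ y_r`,
where `u_r = g(x_{i_r} * u)` and `y_r = (x_{i_r} * u)/u_r`. -/
noncomputable def Dsym (S : SkewPoly k R n) (g : NExp n → NExp n) (s : EKSym n) :
    EKSym n →₀ R :=
  ∑ r : Fin s.1.length,
    ((-1 : k) ^ ((r : ℕ) + 1)) •
      (Finsupp.single (s.1.eraseIdx (r : ℕ), s.2)
          ((((S.C (zc (listMon (s.1.eraseIdx (r : ℕ)) + s.2))
              (Finsupp.single (s.1.get r) (1 : ℤ)))⁻¹ : kˣ) : k) •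
            S.mon (Finsupp.single (s.1.get r) 1))
       - Finsupp.single (s.1.eraseIdx (r : ℕ), g (Finsupp.single (s.1.get r) 1 + s.2))
          ((((S.C (zc (listMon (s.1.eraseIdx (r : ℕ))))
              (zc (Finsupp.single (s.1.get r) 1 + s.2
                    - g (Finsupp.single (s.1.get r) 1 + s.2))))⁻¹ : kˣ) : k) •
            S.mon (Finsupp.single (s.1.get r) 1 + s.2
                    - g (Finsupp.single (s.1.get r) 1 + s.2))))

/-- The differential `D : K_•(I) → K_•(I)` extended right-`R`-linearly. -/
noncomputable def Dfun (S : SkewPoly k R n) (g : NExp n → NExp n)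
    (f : EKSym n →₀ R) : EKSym n →₀ R :=
  f.sum fun s r => rmul (Dsym S g s) r

open scoped Classical in
/-- The value of the Eliahou–Kervaire differential `d` of `L_•(I)` on `e(σ;u)`:
as for `D`, but the second sum is restricted to `A(σ;u)`, i.e. to those `r` for
which `e(σ_r;u_r)` is admissible. -/
noncomputable def dsym (S : SkewPoly k R n) (I : Submodule Rᵐᵒᵖ R)
    (g : NExp n → NExp n) (s : EKSym n) : EKSym n →₀ R :=
  ∑ r : Fin s.1.length,
    ((-1 : k) ^ ((r : ℕ) + 1)) •
      (Finsupp.single (s.1.eraseIdx (r : ℕ), s.2)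
          ((((S.C (zc (listMon (s.1.eraseIdx (r : ℕ)) + s.2))
              (Finsupp.single (s.1.get r) (1 : ℤ)))⁻¹ : kˣ) : k) •
            S.mon (Finsupp.single (s.1.get r) 1))
       - if Adm S I (s.1.eraseIdx (r : ℕ), g (Finsupp.single (s.1.get r) 1 + s.2)) then
          Finsupp.single (s.1.eraseIdx (r : ℕ), g (Finsupp.single (s.1.get r) 1 + s.2))
          ((((S.C (zc (listMon (s.1.eraseIdx (r : ℕ))))
              (zc (Finsupp.single (s.1.get r) 1 + s.2
                    - g (Finsupp.single (s.1.get r) 1 + s.2))))⁻¹ : kˣ) : k) •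
            S.mon (Finsupp.single (s.1.get r) 1 + s.2
                    - g (Finsupp.single (s.1.get r) 1 + s.2)))
         else 0)

/-- The Eliahou–Kervaire differential `d : L_•(I) → L_•(I)` extended
right-`R`-linearly. -/
noncomputable def dfun (S : SkewPoly k R n) (I : Submodule Rᵐᵒᵖ R)
    (g : NExp n → NExp n) (f : EKSym n →₀ R) : EKSym n →₀ R :=
  f.sum fun s r => rmul (dsym S I g s) r

open scoped Classical in
/-- The augmentation `ε : L_0(I) → R`, `e(∅;u) ↦ u`. -/
noncomputable def epsfun (S : SkewPoly k R n) (f : EKSym n →₀ R) : R :=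
  f.sum fun s r => if s.1 = [] then S.mon s.2 * r else 0

/-- Membership in the subcomplex `J`: the last index satisfies `i_q ≥ max(u)`. -/
def JSym {n : ℕ} (s : EKSym n) : Prop :=
  ∃ m : Fin n, s.1.getLast? = some m ∧ maxIdx s.2 ≤ (m : ℕ) + 1

/-- Two integer exponent vectors have the same `G`-degree. -/
def GdegEq (S : SkewPoly k R n) (a b : ZExp n) : Prop := ∀ c, S.chi a c = S.chi b c

end Complex

/-!
Expanding `D (D e(σ;u))` gives a signed sum over ordered pairs of deleted positions of `σ`.
Deleting the entries `x_i` and `x_j` in either order produces the same four terms. The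
coefficients agree because `C` is a bicharacter and `C(g(w), w / g(w)) = 1` (as
`max(g(w)) ≤ min(w / g(w))`); the generators agree because
`g(x_j * g(x_i * u)) = g(x_j * x_i * u)`. The two orders enter with opposite signs, so
everything cancels.
-/

lemma List.eraseIdx_eraseIdx_of_lt {α : Type*} (l : List α) {p q : ℕ} (hpq : p < q) :
    (l.eraseIdx p).eraseIdx (q - 1) = (l.eraseIdx q).eraseIdx p := by
  induction l generalizing p q with
  | nil => simp
  | cons x xs ih =>
    obtain ⟨q, rfl⟩ : ∃ q', q = q' + 1 := ⟨q - 1, by omega⟩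
    cases p with
    | zero => simp
    | succ p =>
      obtain ⟨q, rfl⟩ : ∃ q', q = q' + 1 := ⟨q - 1, by omega⟩
      simpa using ih (p := p) (q := q + 1) (by omega)

/-- The terms `(p, q - 1)` and `(q, p)` cancel in pairs. -/
lemma sum_range_sum_range_neg_one_pow_smul_eq_zero {A M : Type*} [Ring A] [AddCommGroup M]
    [Module A M] (m : ℕ) (F : ℕ → ℕ → M)
    (hF : ∀ p q, p < q → q < m → F p (q - 1) = F q p) :
    ∑ p ∈ Finset.range m, ∑ t ∈ Finset.range (m - 1), (-1 : A) ^ (p + t) • F p t = 0 := by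
  have hsign : ∀ a b, a + 1 = b ∨ b + 1 = a → (-1 : A) ^ a + (-1 : A) ^ b = 0 := by
    rintro a b (rfl | rfl)
    · rw [pow_succ, mul_neg_one, add_neg_cancel]
    · rw [pow_succ, mul_neg_one, neg_add_cancel]
  rw [← Finset.sum_product']
  refine Finset.sum_involution
    (fun x _ => if x.2 < x.1 then (x.2, x.1 - 1) else (x.2 + 1, x.1)) ?_ ?_ ?_ ?_ <;>
    rintro ⟨p, t⟩ hx <;> simp only [Finset.mem_product, Finset.mem_range] at hx ⊢
  · split_ifs with h
    · rw [hF t p h hx.1, ← add_smul, hsign _ _ (by omega), zero_smul]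
    · rw [← hF p (t + 1) (by omega) (by omega), Nat.add_sub_cancel, ← add_smul,
        hsign _ _ (by omega), zero_smul]
  · intro _
    split_ifs <;> simp only [ne_eq, Prod.mk.injEq] <;> omega
  · split_ifs <;> omega
  · split_ifs <;> simp only [Prod.mk.injEq, and_true, true_and] <;> omega

lemma List.sum_sum_eraseIdx_eraseIdx_eq_zero {α A M : Type*} [Ring A] [AddCommGroup M]
    [Module A M] (σ : List α) (F : List α → α → α → M)
    (hF : ∀ τ a b, F τ a b = F τ b a) :
    ∑ r : Fin σ.length, ∑ t : Fin (σ.eraseIdx r).length,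
      (-1 : A) ^ ((r : ℕ) + t) • F ((σ.eraseIdx r).eraseIdx t) σ[r] (σ.eraseIdx r)[t] =
        0 := by
  have hlen : ∀ p < σ.length, (σ.eraseIdx p).length = σ.length - 1 := fun p hp =>
    List.length_eraseIdx_of_lt hp
  let G : ℕ → ℕ → M := fun p t =>
    if h : p < σ.length ∧ t < σ.length - 1 then
      F ((σ.eraseIdx p).eraseIdx t) σ[p] ((σ.eraseIdx p)[t]'(by rw [hlen p h.1]; exact h.2))
    else 0
  convert sum_range_sum_range_neg_one_pow_smul_eq_zero (A := A) σ.length G ?_ using 1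
  · rw [Finset.sum_fin_eq_sum_range]
    refine Finset.sum_congr rfl fun p hp => ?_
    rw [Finset.mem_range] at hp
    rw [dif_pos hp, Finset.sum_fin_eq_sum_range]
    refine Finset.sum_congr (by rw [hlen p hp]) fun t ht => ?_
    rw [Finset.mem_range] at ht
    rw [dif_pos (by rw [hlen p hp]; exact ht)]
    simp only [G, dif_pos (And.intro hp ht), Fin.getElem_fin]
  · intro p q hpq hq
    simp only [G, dif_pos (And.intro (hpq.trans hq) (by omega : q - 1 < σ.length - 1)),
      dif_pos (And.intro hq (by omega : p < σ.length - 1))]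
    rw [hF]
    congr 1
    · exact List.eraseIdx_eraseIdx_of_lt σ hpq
    · simp [List.getElem_eraseIdx, show ¬ q - 1 < p by omega, show q - 1 + 1 = q by omega]
    · simp [List.getElem_eraseIdx, hpq]

lemma zc_apply {n : ℕ} (a : NExp n) (i : Fin n) : zc a i = a i := Finsupp.mapRange_apply

lemma zc_add {n : ℕ} (a b : NExp n) : zc (a + b) = zc a + zc b := by
  ext i; simp [zc_apply]

lemma zc_single {n : ℕ} (i : Fin n) : zc (single i 1) = single i (1 : ℤ) := by
  ext j; simp [zc_apply, single_apply, apply_ite]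

lemma support_zc {n : ℕ} (a : NExp n) : (zc a).support = a.support := by
  ext i; simp [zc_apply]

lemma le_maxIdx_of_mem_support {n : ℕ} {a : NExp n} {i : Fin n} (h : i ∈ a.support) :
    (i : ℕ) + 1 ≤ maxIdx a :=
  Finset.le_sup (f := fun i : Fin n => (i : ℕ) + 1) h

lemma listMon_eq_add_listMon_eraseIdx {n : ℕ} (l : List (Fin n)) {p : ℕ} (h : p < l.length) :
    listMon l = listMon (l.eraseIdx p) + single l[p] 1 := by
  rw [listMon, ← ((List.getElem_cons_eraseIdx_perm h).map _).sum_eq, List.map_cons,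
    List.sum_cons, add_comm, listMon]

namespace SkewPoly

variable {k R : Type*} [CommRing k] [Ring R] [Algebra k R] {n : ℕ} (S : SkewPoly k R n)

noncomputable def CLeft (b : ZExp n) : ZExp n →+ Additive kˣ :=
  AddMonoidHom.mk' (fun a => Additive.ofMul (S.C a b)) fun a a' => S.C_add_left a a' b

noncomputable def CRight (a : ZExp n) : ZExp n →+ Additive kˣ :=
  AddMonoidHom.mk' (fun b => Additive.ofMul (S.C a b)) (S.C_add_right a)

lemma C_eq_prod (a b : ZExp n) :
    S.C a b =
      ∏ i ∈ a.support, (∏ j ∈ b.support, S.C (single i 1) (single j 1) ^ b j) ^ a i := by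
  have expand : ∀ (φ : ZExp n →+ Additive kˣ) (c : ZExp n),
      (φ c).toMul = ∏ i ∈ c.support, (φ (single i 1)).toMul ^ c i := fun φ c => by
    conv_lhs => rw [← Finsupp.sum_single c]
    rw [Finsupp.sum, map_sum, toMul_sum]
    refine Finset.prod_congr rfl fun i _ => ?_
    rw [← smul_single_one, map_zsmul, toMul_zsmul]
  exact (expand (S.CLeft b) a).trans
    (Finset.prod_congr rfl fun i _ => congrArg (· ^ a i) (expand (S.CRight (single i 1)) b))

lemma C_zc_eq_one_of_maxLeMin {a b : NExp n} (h : maxLeMin a b) : S.C (zc a) (zc b) = 1 := by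
  rw [C_eq_prod]
  refine Finset.prod_eq_one fun i hi => ?_
  rw [Finset.prod_eq_one fun j hj => ?_, one_zpow]
  rw [support_zc] at hi hj
  have hij : ¬ j < i := by
    have := le_maxIdx_of_mem_support hi
    have := h j hj
    rw [Fin.lt_def]; omega
  rw [S.C_single, if_neg hij, one_zpow]

lemma C_zc_add_left (a b c : NExp n) :
    S.C (zc (a + b)) (zc c) = S.C (zc a) (zc c) * S.C (zc b) (zc c) := by
  rw [zc_add, S.C_add_left]

lemma C_zc_add_right (a b c : NExp n) :
    S.C (zc a) (zc (b + c)) = S.C (zc a) (zc b) * S.C (zc a) (zc c) := by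
  rw [zc_add, S.C_add_right]

/-- The coefficients of `D` have the form `C(x^a, x^y)⁻¹ x^y`. -/
noncomputable def twistedMon (a y : NExp n) : R :=
  (((S.C (zc a) (zc y))⁻¹ : kˣ) : k) • S.mon y

lemma twistedMon_mul (a b y y' : NExp n) :
    S.twistedMon a y * S.twistedMon b y' =
      (((S.C (zc a) (zc y))⁻¹ * (S.C (zc b) (zc y'))⁻¹ * S.C (zc y) (zc y') : kˣ) : k) •
        S.mon (y + y') := by
  rw [twistedMon, twistedMon, smul_mul_smul_comm, S.mon_mul, smul_smul]
  push_cast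
  rfl

lemma twistedMon_mul_twistedMon_add (a a' y y' : NExp n) :
    S.twistedMon a y * S.twistedMon (a' + y) y' =
      (((S.C (zc a) (zc y) * S.C (zc a') (zc y'))⁻¹ : kˣ) : k) • S.mon (y + y') := by
  rw [twistedMon_mul, C_zc_add_left, mul_inv, mul_inv, mul_assoc, inv_mul_cancel_right]

lemma twistedMon_mul_twistedMon_comm (a b y y' : NExp n) :
    S.twistedMon a y * S.twistedMon (a + b + y) y' =
      S.twistedMon (a + b) y' * S.twistedMon (a + y') y := by
  rw [twistedMon_mul_twistedMon_add, twistedMon_mul_twistedMon_add, mul_comm, add_comm y]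

lemma twistedMon_mul_twistedMon_add_comm (a y y' : NExp n) :
    S.twistedMon a y * S.twistedMon (a + y) y' =
      S.twistedMon a y' * S.twistedMon (a + y') y := by
  simpa using S.twistedMon_mul_twistedMon_comm a 0 y y'

lemma twistedMon_mul_twistedMon_of_add_eq {a c v w y z : NExp n} (h : w + z = c + v)
    (hvy : S.C (zc v) (zc y) = 1) (hwz : S.C (zc w) (zc z) = 1)
    (hwzy : S.C (zc w) (zc (z + y)) = 1) :
    S.twistedMon a z * S.twistedMon (a + c) y = S.twistedMon a (z + y) := by
  have hwy : S.C (zc w) (zc y) = 1 := by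
    rwa [C_zc_add_right, hwz, one_mul] at hwzy
  have hzy : S.C (zc z) (zc y) = S.C (zc c) (zc y) := by
    have := congrArg (fun x => S.C (zc x) (zc y)) h
    simp only [C_zc_add_left, hwy, hvy, one_mul, mul_one] at this
    exact this
  rw [twistedMon_mul, hzy, C_zc_add_left, twistedMon, C_zc_add_right, mul_inv, mul_inv,
    mul_assoc, inv_mul_cancel_right]

lemma add_mem_monSet_s4 {I : Submodule Rᵐᵒᵖ R} {u : NExp n} (hu : u ∈ S.monSet I)
    (b : NExp n) :
    b + u ∈ S.monSet I := by
  have h : S.mon (b + u) =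
      MulOpposite.op ((((S.C (zc u) (zc b))⁻¹ : kˣ) : k) • S.mon b) • S.mon u := by
    rw [MulOpposite.smul_eq_mul_unop, MulOpposite.unop_op, mul_smul_comm, S.mon_mul,
      smul_smul, ← Units.val_mul, inv_mul_cancel, Units.val_one, one_smul, add_comm]
  change S.mon (b + u) ∈ I
  exact h ▸ I.smul_mem _ hu

end SkewPoly

lemma maxIdx_le_of_maxLeMin_of_lt {n : ℕ} {w u u' : NExp n} {i : Fin n} (hu : u ≤ w)
    (hu' : maxLeMin u' (w - u')) (hi : u' i < u i) :
    maxIdx u' ≤ (i : ℕ) + 1 ∧ (i : ℕ) + 1 ≤ maxIdx u := by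
  have hiw := Finsupp.le_def.1 hu i
  exact ⟨hu' i (by rw [mem_support_iff, tsub_apply]; omega),
    le_maxIdx_of_mem_support (mem_support_iff.2 (by omega))⟩

namespace SkewPoly

variable {k R : Type*} [CommRing k] [Ring R] [Algebra k R] {n : ℕ} {S : SkewPoly k R n}
  {I : Submodule Rᵐᵒᵖ R}

lemma eq_of_mem_G_of_maxLeMin {w u u' : NExp n} (hu : u ∈ S.G I) (hu' : u' ∈ S.G I)
    (huw : u ≤ w) (hu'w : u' ≤ w) (hmax : maxLeMin u (w - u)) (hmax' : maxLeMin u' (w - u')) :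
    u = u' := by
  by_cases hle : u ≤ u'
  · exact hu'.2 u hu.1 hle
  by_cases hle' : u' ≤ u
  · exact (hu.2 u' hu'.1 hle').symm
  obtain ⟨i, hi⟩ : ∃ i, u' i < u i := by simpa [Finsupp.le_def] using hle
  obtain ⟨j, hj⟩ : ∃ j, u j < u' j := by simpa [Finsupp.le_def] using hle'
  obtain ⟨hi₁, hi₂⟩ := maxIdx_le_of_maxLeMin_of_lt huw hmax' hi
  obtain ⟨hj₁, hj₂⟩ := maxIdx_le_of_maxLeMin_of_lt hu'w hmax hj
  obtain rfl : i = j := Fin.ext (by omega)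
  omega

variable {g : NExp n → NExp n}

lemma IsDecompFun.add_tsub_cancel (hg : S.IsDecompFun I g) {w : NExp n}
    (hw : w ∈ S.monSet I) : g w + (w - g w) = w :=
  add_tsub_cancel_of_le (hg w hw).2.1

lemma IsDecompFun.apply_eq_of_maxLeMin (hg : S.IsDecompFun I g) {w v : NExp n}
    (hw : w ∈ S.monSet I) (hv : v ∈ S.G I) (hvw : v ≤ w) (hmax : maxLeMin v (w - v)) :
    g w = v :=
  eq_of_mem_G_of_maxLeMin (hg w hw).1 hv (hg w hw).2.1 hvw (hg w hw).2.2 hmax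

/-- If the generator of `x_i * u` ended beyond `max(u)`, that generator would be `x_i * u`
itself, contradicting the minimality of generators. -/
lemma IsDecompFun.maxIdx_apply_single_add_le (hg : S.IsDecompFun I g) {u : NExp n}
    (hu : u ∈ S.monSet I) (i : Fin n) :
    maxIdx (g (single i 1 + u)) ≤ maxIdx u := by
  obtain ⟨hvG, hvle, hvmax⟩ := hg _ (S.add_mem_monSet_s4 hu (single i 1))
  set v := g (single i 1 + u)
  by_contra! hlt
  have hne : v.support.Nonempty := by
    rw [Finset.nonempty_iff_ne_empty]
    intro he
    simp [maxIdx, he] at hlt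
  obtain ⟨m, hm, hmv⟩ := Finset.exists_mem_eq_sup v.support hne fun j : Fin n => (j : ℕ) + 1
  change maxIdx v = (m : ℕ) + 1 at hmv
  have hvm := mem_support_iff.1 hm
  have hu_lt : ∀ j, u j ≠ 0 → (j : ℕ) < m := fun j hj => by
    have := le_maxIdx_of_mem_support (mem_support_iff.2 hj); omega
  have hv_le : ∀ j, v j ≠ 0 → (j : ℕ) ≤ m := fun j hj => by
    have := le_maxIdx_of_mem_support (mem_support_iff.2 hj); omega
  have hle : ∀ j, v j ≤ single i 1 j + u j := fun j => by
    simpa using Finsupp.le_def.1 hvle j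
  have hz : ∀ j, v j < single i 1 j + u j → (m : ℕ) ≤ j := fun j hj => by
    have := hvmax j (by rw [mem_support_iff, tsub_apply, Finsupp.add_apply]; omega); omega
  obtain rfl : i = m := by
    by_contra hne
    have := hle m
    rw [single_apply, if_neg hne] at this
    have := hu_lt m
    omega
  have hveq : v = single i 1 + u := by
    ext j
    rw [Finsupp.add_apply]
    have := hle j; have := hz j; have := hu_lt j; have := hv_le j
    by_cases hij : i = j
    · subst hij; rw [single_eq_same] at *; omega
    · rw [single_apply, if_neg hij] at *
      have : (i : ℕ) ≠ j := fun h => hij (Fin.ext h)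
      omega
  have hvu : u = v := hvG.2 u hu (hveq ▸ le_add_self)
  rw [hvu] at hlt
  exact lt_irrefl _ hlt

lemma IsDecompFun.apply_single_add_apply (hg : S.IsDecompFun I g) {u : NExp n}
    (hu : u ∈ S.monSet I) (i : Fin n) :
    g (single i 1 + g u) = g (single i 1 + u) := by
  obtain ⟨hu₁G, hu₁le, hu₁max⟩ := hg u hu
  obtain ⟨hvG, hvle, hvmax⟩ := hg _ (S.add_mem_monSet_s4 hu₁G.1 (single i 1))
  have hvmaxIdx := hg.maxIdx_apply_single_add_le hu₁G.1 i
  refine (hg.apply_eq_of_maxLeMin (S.add_mem_monSet_s4 hu _) hvG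
    (hvle.trans (add_le_add_right hu₁le _)) fun j hj => ?_).symm
  rw [mem_support_iff, tsub_apply, Finsupp.add_apply] at hj
  have hvj := Finsupp.le_def.1 hvle j
  rw [Finsupp.add_apply] at hvj
  by_cases hc : g (single i 1 + g u) j < single i 1 j + g u j
  · exact hvmax j (by rw [mem_support_iff, tsub_apply, Finsupp.add_apply]; omega)
  · have := hu₁max j (by rw [mem_support_iff, tsub_apply]; omega)
    omega

end SkewPoly

section Differential

variable {k R : Type*} [CommRing k] [Ring R] [Algebra k R] {n : ℕ}

variable (k) in
lemma rmul_eq_mapRange (f : EKSym n →₀ R) (r : R) :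
    rmul f r = Finsupp.mapRange.linearMap (LinearMap.mulRight k r) f := rfl

variable (k) in
noncomputable def rmulLinearMap (f : EKSym n →₀ R) : R →ₗ[k] EKSym n →₀ R where
  toFun := rmul f
  map_add' r r' := by ext; simp [rmul, mul_add]
  map_smul' c r := by ext; simp [rmul]

variable (S : SkewPoly k R n) (g : NExp n → NExp n)

noncomputable def DLinearMap : (EKSym n →₀ R) →ₗ[k] EKSym n →₀ R :=
  Finsupp.lsum k fun s => rmulLinearMap k (Dsym S g s)

lemma Dfun_eq_DLinearMap (f : EKSym n →₀ R) : Dfun S g f = DLinearMap S g f := rfl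

lemma DLinearMap_single (s : EKSym n) (r : R) :
    DLinearMap S g (single s r) = rmul (Dsym S g s) r :=
  Finsupp.lsum_single _ _ _ _

/-- The summand of `D e(σ;u)` that deletes the entry `i` of `σ`, leaving the list `τ`. -/
noncomputable def face (τ : List (Fin n)) (u : NExp n) (i : Fin n) : EKSym n →₀ R :=
  single (τ, u) (S.twistedMon (listMon τ + u) (single i 1)) -
    single (τ, g (single i 1 + u))
      (S.twistedMon (listMon τ) (single i 1 + u - g (single i 1 + u)))

lemma Dsym_eq_sum_face (σ : List (Fin n)) (u : NExp n) :
    Dsym S g (σ, u) = ∑ r : Fin σ.length, (-1 : k) ^ ((r : ℕ) + 1) •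
      face S g (σ.eraseIdx r) u σ[r] := by
  simp only [Dsym, face, SkewPoly.twistedMon, zc_single, List.get_eq_getElem, Fin.getElem_fin]

/-- The part of `D (D e(σ;u))` that deletes the entry `i` and then the entry `j`, leaving `τ`. -/
noncomputable def doubleFace (τ : List (Fin n)) (u : NExp n) (i j : Fin n) : EKSym n →₀ R :=
  rmul (face S g τ u j) (S.twistedMon (listMon τ + single j 1 + u) (single i 1)) -
    rmul (face S g τ (g (single i 1 + u)) j)
      (S.twistedMon (listMon τ + single j 1) (single i 1 + u - g (single i 1 + u)))

lemma Dfun_face (τ : List (Fin n)) (u : NExp n) (i : Fin n) :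
    Dfun S g (face S g τ u i) = ∑ r : Fin τ.length, (-1 : k) ^ ((r : ℕ) + 1) •
      doubleFace S g (τ.eraseIdx r) u i τ[r] := by
  rw [Dfun_eq_DLinearMap, face, map_sub, DLinearMap_single, DLinearMap_single,
    Dsym_eq_sum_face, Dsym_eq_sum_face, rmul_eq_mapRange k, rmul_eq_mapRange k, map_sum, map_sum,
    ← Finset.sum_sub_distrib]
  refine Finset.sum_congr rfl fun r _ => ?_
  rw [map_smul, map_smul, ← smul_sub, doubleFace, Fin.getElem_fin,
    ← listMon_eq_add_listMon_eraseIdx _ r.isLt]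
  rfl

lemma Dfun_Dfun_single (σ : List (Fin n)) (u : NExp n) :
    Dfun S g (Dfun S g (single (σ, u) 1)) =
      ∑ r : Fin σ.length, ∑ t : Fin (σ.eraseIdx r).length, (-1 : k) ^ ((r : ℕ) + t) •
        doubleFace S g ((σ.eraseIdx r).eraseIdx t) u σ[r] (σ.eraseIdx r)[t] := by
  have hDsingle : Dfun S g (single (σ, u) 1) = Dsym S g (σ, u) := by
    rw [Dfun_eq_DLinearMap, DLinearMap_single, rmul_eq_mapRange k]
    ext s
    simp
  rw [hDsingle, Dsym_eq_sum_face, Dfun_eq_DLinearMap, map_sum]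
  refine Finset.sum_congr rfl fun r _ => ?_
  rw [map_smul, ← Dfun_eq_DLinearMap, Dfun_face, Finset.smul_sum]
  refine Finset.sum_congr rfl fun t _ => ?_
  rw [smul_smul, ← pow_add, show (r : ℕ) + 1 + (t + 1) = r + t + 2 by omega, pow_add,
    neg_one_sq, mul_one]

end Differential

section DoubleFace

variable {k R : Type*} [CommRing k] [Ring R] [Algebra k R] {n : ℕ} {S : SkewPoly k R n}
  {I : Submodule Rᵐᵒᵖ R} {g : NExp n → NExp n}

lemma SkewPoly.IsDecompFun.twistedMon_mul_twistedMon (hg : S.IsDecompFun I g) {w : NExp n}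
    (hw : w ∈ S.monSet I) (a : NExp n) (j : Fin n) :
    S.twistedMon a (single j 1 + g w - g (single j 1 + g w)) *
        S.twistedMon (a + single j 1) (w - g w) =
      S.twistedMon a (single j 1 + w - g (single j 1 + w)) := by
  obtain ⟨hvG, hvle, hvmax⟩ := hg w hw
  have hjv := S.add_mem_monSet_s4 hvG.1 (single j 1)
  have hjw := S.add_mem_monSet_s4 hw (single j 1)
  have hW := hg.apply_single_add_apply hw j
  have hsum : single j 1 + g w - g (single j 1 + w) + (w - g w) =
      single j 1 + w - g (single j 1 + w) := by
    have hWle := (hg _ hjv).2.1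
    rw [hW] at hWle
    ext c
    have h₁ := Finsupp.le_def.1 hWle c
    have h₂ := Finsupp.le_def.1 hvle c
    simp only [Finsupp.add_apply, tsub_apply] at h₁ ⊢
    omega
  rw [hW, ← hsum]
  refine S.twistedMon_mul_twistedMon_of_add_eq (v := g w) (w := g (single j 1 + w)) ?_
    (S.C_zc_eq_one_of_maxLeMin hvmax) ?_ ?_
  · rw [← hW]; exact hg.add_tsub_cancel hjv
  · rw [← hW]; exact S.C_zc_eq_one_of_maxLeMin (hg _ hjv).2.2
  · rw [hsum]; exact S.C_zc_eq_one_of_maxLeMin (hg _ hjw).2.2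

lemma SkewPoly.IsDecompFun.doubleFace_eq (hg : S.IsDecompFun I g) {u : NExp n}
    (hu : u ∈ S.monSet I) (τ : List (Fin n)) (i j : Fin n) :
    doubleFace S g τ u i j =
      single (τ, u) (S.twistedMon (listMon τ + u) (single j 1) *
          S.twistedMon (listMon τ + single j 1 + u) (single i 1)) -
        single (τ, g (single j 1 + u))
          (S.twistedMon (listMon τ) (single j 1 + u - g (single j 1 + u)) *
            S.twistedMon (listMon τ + single j 1 + u) (single i 1)) -
        single (τ, g (single i 1 + u))
          (S.twistedMon (listMon τ + g (single i 1 + u)) (single j 1) *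
            S.twistedMon (listMon τ + single j 1) (single i 1 + u - g (single i 1 + u))) +
        single (τ, g (single j 1 + (single i 1 + u)))
          (S.twistedMon (listMon τ)
            (single j 1 + (single i 1 + u) - g (single j 1 + (single i 1 + u)))) := by
  have hiu := S.add_mem_monSet_s4 hu (single i 1)
  simp only [doubleFace, face, rmul_eq_mapRange k, map_sub, mapRange.linearMap_apply,
    mapRange_single, LinearMap.mulRight_apply]
  rw [hg.twistedMon_mul_twistedMon hiu, hg.apply_single_add_apply hiu]
  abel

lemma SkewPoly.IsDecompFun.doubleFace_comm (hg : S.IsDecompFun I g) {u : NExp n}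
    (hu : u ∈ S.monSet I) (τ : List (Fin n)) (i j : Fin n) :
    doubleFace S g τ u i j = doubleFace S g τ u j i := by
  have hAA : S.twistedMon (listMon τ + u) (single j 1) *
        S.twistedMon (listMon τ + single j 1 + u) (single i 1) =
      S.twistedMon (listMon τ + u) (single i 1) *
        S.twistedMon (listMon τ + single i 1 + u) (single j 1) := by
    rw [add_right_comm _ (single j 1), add_right_comm _ (single i 1)]
    exact S.twistedMon_mul_twistedMon_add_comm _ _ _
  -- The second term of `doubleFace_eq` for `(i, j)` is its third term for `(j, i)`.
  have hAB : ∀ i j : Fin n,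
      S.twistedMon (listMon τ) (single j 1 + u - g (single j 1 + u)) *
          S.twistedMon (listMon τ + single j 1 + u) (single i 1) =
        S.twistedMon (listMon τ + g (single j 1 + u)) (single i 1) *
          S.twistedMon (listMon τ + single i 1) (single j 1 + u - g (single j 1 + u)) :=
    fun i j => by
      have hdec : listMon τ + single j 1 + u =
          listMon τ + g (single j 1 + u) + (single j 1 + u - g (single j 1 + u)) := by
        rw [add_assoc, add_assoc, hg.add_tsub_cancel (S.add_mem_monSet_s4 hu (single j 1))]
      rw [hdec]
      exact S.twistedMon_mul_twistedMon_comm _ _ _ _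
  rw [hg.doubleFace_eq hu, hg.doubleFace_eq hu, add_left_comm (single j 1), hAA, hAB i j,
    hAB j i]
  abel

end DoubleFace

section Statements

open Finsupp

variable {k R : Type*} [CommRing k] [Ring R] [Algebra k R] {n : ℕ}

theorem stmt4_general
    (S : SkewPoly k R n) (I : Submodule Rᵐᵒᵖ R)
    (g : NExp n → NExp n) (hg : S.IsDecompFun I g) :
    ∀ (σ : List (Fin n)) (u : NExp n), σ.Pairwise (· ≤ ·) → u ∈ S.G I →
      Dfun S g (Dfun S g (Finsupp.single (σ, u) 1)) = 0 := by
  intro σ u _ hu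
  rw [Dfun_Dfun_single]
  exact List.sum_sum_eraseIdx_eraseIdx_eq_zero σ _ fun τ i j => hg.doubleFace_comm hu.1 τ i j

theorem stmt4 [IsNoetherianRing k]
    (S : SkewPoly k R n) (I : Submodule Rᵐᵒᵖ R)
    (hmono : S.IsMonomialIdeal I) (hstab : S.IsStable I)
    (g : NExp n → NExp n) (hg : S.IsDecompFun I g) :
    ∀ (σ : List (Fin n)) (u : NExp n), σ.Pairwise (· ≤ ·) → u ∈ S.G I →
      Dfun S g (Dfun S g (Finsupp.single (σ, u) 1)) = 0 :=
  stmt4_general S I g hg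

end Statements
end
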